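/- Let S = ⟨qm₁,…,qm_d, pn₁,…,pn_k⟩ be a specific gluing of S₁ and S₂, and let x∈S₁ be nonzero. Then the following are equivalent: (1) S is symmetric and M-pure with respect to qx, and S₁ (or S₂) is symmetric; (2) S₁ is symmetric and M-pure with respect to x, and S₂ is symmetric and M-pure with respect to q. -/

import Mathlib

open scoped Pointwise

/-- `S ⊆ ℕ` is a numerical semigroup: it contains `0`, is closed under
addition, and has finite complement in `ℕ`. -/
def IsNumSgp (S : Set ℕ) : Prop :=
  (0 : ℕ) ∈ S ∧ (∀ a ∈ S, ∀ b ∈ S, a + b ∈ S) ∧ {x : ℕ | x ∉ S}.Finite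

/-- `nM S t` is the `t`-fold sumset of the maximal ideal `M = S \ {0}`,
with the convention `nM S 0 = S`. -/
def nM (S : Set ℕ) : ℕ → Set ℕ
  | 0 => S
  | t + 1 => (S \ {0}) + nM S t

/-- the order of `s` with respect to `S` : the largest `t` with `s ∈ tM`. -/
noncomputable def ordS (S : Set ℕ) (s : ℕ) : ℕ := sSup {t : ℕ | s ∈ nM S t}

/-- the multiplicity of `S` : its least nonzero element. -/
noncomputable def mult (S : Set ℕ) : ℕ := sInf {x : ℕ | x ∈ S ∧ x ≠ 0}

/-- the Apéry set of `S` with respect to `x` : elements `s ∈ S` with `s - x ∉ S`. -/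
def Ap (S : Set ℕ) (x : ℕ) : Set ℕ := {s : ℕ | s ∈ S ∧ ¬ ∃ t ∈ S, s = t + x}

/-- membership of an integer in (the image in `ℤ` of) `S`. -/
def zmem (S : Set ℕ) (z : ℤ) : Prop := ∃ t ∈ S, (t : ℤ) = z

/-- the Frobenius number of `S` : the largest integer not in `S`. -/
noncomputable def Frob (S : Set ℕ) : ℤ := sSup {z : ℤ | ¬ zmem S z}

/-- `S` is symmetric: for every integer `z`, `z ∈ S` iff `F(S) - z ∉ S`. -/
def IsSymmetric (S : Set ℕ) : Prop := ∀ z : ℤ, zmem S z ↔ ¬ zmem S (Frob S - z)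

/-- the set of maximal elements of `Ap S x` with respect to the order
`u ⪯ v` iff `v = u + z` for some `z ∈ S`. -/
def MaxAp (S : Set ℕ) (x : ℕ) : Set ℕ :=
  {w : ℕ | w ∈ Ap S x ∧ ∀ y ∈ Ap S x, (∃ z ∈ S, y = w + z) → y = w}

/-- the set of maximal elements of `Ap S x` with respect to the order
`u ⪯_M v` iff `v = u + z` for some `z ∈ S` with `ord(v) = ord(u) + ord(z)`. -/
def MaxMAp (S : Set ℕ) (x : ℕ) : Set ℕ :=
  {w : ℕ | w ∈ Ap S x ∧ ∀ y ∈ Ap S x,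
    (∃ z ∈ S, y = w + z ∧ ordS S y = ordS S w + ordS S z) → y = w}

/-- `S` is M-pure with respect to `x` : all maximal elements of `Ap S x`
under `⪯_M` have the same order. -/
def MPureWrt (S : Set ℕ) (x : ℕ) : Prop :=
  ∀ w ∈ MaxMAp S x, ∀ w' ∈ MaxMAp S x, ordS S w = ordS S w'

/-- `S` is M-pure : it is M-pure with respect to its multiplicity. -/
def MPure (S : Set ℕ) : Prop := MPureWrt S (mult S)

/-- `β_i(x)` : the number of elements of `Ap S x` of order `i`. -/
noncomputable def betaS (S : Set ℕ) (x i : ℕ) : ℕ := {w ∈ Ap S x | ordS S w = i}.ncard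

/-- `d(x)` : the maximal order of an element of `Ap S x`. -/
noncomputable def dS (S : Set ℕ) (x : ℕ) : ℕ := sSup (ordS S '' Ap S x)

/-- the reduction number of `S` : the least `r` with `(r+1)M = m(S) + rM`. -/
noncomputable def redNum (S : Set ℕ) : ℕ :=
  sInf {r : ℕ | nM S (r + 1) = (fun y => mult S + y) '' nM S r}

/-- `l_x(S) = max { ord(s+x) - ord(x) - ord(s) : s ∈ S, ord(s) ≤ r }`. -/
noncomputable def lS (S : Set ℕ) (x : ℕ) : ℕ :=
  sSup {t : ℕ | ∃ s ∈ S, ordS S s ≤ redNum S ∧ t = ordS S (s + x) - ordS S x - ordS S s}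

/-- the Hilbert function of `S`. -/
noncomputable def HilbS (S : Set ℕ) (t : ℕ) : ℕ := (nM S t \ nM S (t + 1)).ncard

/-- The data of a gluing `S = ⟨q m₁, …, q m_d, p n₁, …, p n_k⟩` of two numerical
semigroups `S₁ = ⟨m₁, …, m_d⟩` and `S₂ = ⟨n₁, …, n_k⟩`, minimally generated by
`m₁ < ⋯ < m_d` and `n₁ < ⋯ < n_k`, where `p ∈ S₁ \ {m₁, …, m_d}`,
`q ∈ S₂ \ {n₁, …, n_k}` and `gcd(p, q) = 1`. -/
structure Gluing where
  d : ℕ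
  k : ℕ
  hd : 0 < d
  hk : 0 < k
  m : Fin d → ℕ
  n : Fin k → ℕ
  p : ℕ
  q : ℕ
  hm : StrictMono m
  hn : StrictMono n
  hmin₁ : ∀ i, m i ∉ AddSubmonoid.closure (Set.range m \ {m i})
  hmin₂ : ∀ j, n j ∉ AddSubmonoid.closure (Set.range n \ {n j})
  hnum₁ : IsNumSgp (AddSubmonoid.closure (Set.range m) : Set ℕ)
  hnum₂ : IsNumSgp (AddSubmonoid.closure (Set.range n) : Set ℕ)
  hp : p ∈ AddSubmonoid.closure (Set.range m)
  hq : q ∈ AddSubmonoid.closure (Set.range n)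
  hpm : p ∉ Set.range m
  hqn : q ∉ Set.range n
  hpq : Nat.gcd p q = 1

/-- the numerical semigroup `S₁ = ⟨m₁, …, m_d⟩`. -/
def Gluing.S₁ (G : Gluing) : Set ℕ := (AddSubmonoid.closure (Set.range G.m) : Set ℕ)

/-- the numerical semigroup `S₂ = ⟨n₁, …, n_k⟩`. -/
def Gluing.S₂ (G : Gluing) : Set ℕ := (AddSubmonoid.closure (Set.range G.n) : Set ℕ)

/-- the glued numerical semigroup `S = ⟨q m₁, …, q m_d, p n₁, …, p n_k⟩`. -/
def Gluing.S (G : Gluing) : Set ℕ :=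
  (AddSubmonoid.closure
    ((fun x => G.q * x) '' Set.range G.m ∪ (fun x => G.p * x) '' Set.range G.n) : Set ℕ)

/-- the smallest generator `m₁` of `S₁`. -/
def Gluing.m₁ (G : Gluing) : ℕ := G.m ⟨0, G.hd⟩

/-- the smallest generator `n₁` of `S₂`. -/
def Gluing.n₁ (G : Gluing) : ℕ := G.n ⟨0, G.hk⟩

/-- the gluing is specific if `ord_{S₂}(q) + l_q(S₂) ≤ ord_{S₁}(p)`. -/
def Gluing.Specific (G : Gluing) : Prop := ordS G.S₂ G.q + lS G.S₂ G.q ≤ ordS G.S₁ G.p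

/-- the gluing is nice if `q = a n₁` for some `1 < a ≤ ord_{S₁}(p)`. -/
def Gluing.Nice (G : Gluing) : Prop := ∃ a : ℕ, 1 < a ∧ a ≤ ordS G.S₁ G.p ∧ G.q = a * G.n₁

/-!
Since `p` and `q` are coprime, every element of `S = q S₁ + p S₂` is uniquely `q a + p b` with
`a ∈ S₁` and `b ∈ Ap(S₂, q)`, and every integer is `q a + p b` with `a ∈ ℤ` and such a `b`.
Membership in `S` is thereby read off from membership of `a` in `S₁`, which gives
`F(S) = q F(S₁) + p (F(S₂) + q)` and transfers symmetry in both directions.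

Specificity makes this representation additive for orders, `ord_S (q a + p b) = ord a + ord b`:
trading `c q` in the `S₂`-part for `c p` in the `S₁`-part never increases the order. Hence
`Ap(S, q x) = q Ap(S₁, x) + p Ap(S₂, q)`, its `⪯_M`-maximal elements are exactly the sums of
maximal elements of the two factors, and M-purity of `S` with respect to `q x` splits into
M-purity of `S₁` with respect to `x` and of `S₂` with respect to `q`.
-/

section Order

variable {S T : AddSubmonoid ℕ}

lemma mem_nM_succ {t s : ℕ} :
    s ∈ nM S (t + 1) ↔ ∃ g ∈ S, g ≠ 0 ∧ ∃ y ∈ nM S t, g + y = s := by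
  simp [nM, Set.mem_add, and_assoc]

lemma add_mem_nM_of_mem {t v y : ℕ} (hv : v ∈ S) (hy : y ∈ nM S t) : v + y ∈ nM S t := by
  induction t generalizing y with
  | zero => exact add_mem hv hy
  | succ t ih =>
    obtain ⟨g, hg, hg0, y', hy', rfl⟩ := mem_nM_succ.1 hy
    exact mem_nM_succ.2 ⟨g, hg, hg0, v + y', ih hy', by ring⟩

lemma nM_subset {t : ℕ} : nM S t ⊆ S := by
  induction t with
  | zero => exact subset_rfl
  | succ t ih =>
    rintro s hs
    obtain ⟨g, hg, -, y, hy, rfl⟩ := mem_nM_succ.1 hs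
    exact add_mem hg (ih hy)

lemma add_mem_nM {t u a b : ℕ} (ha : a ∈ nM S t) (hb : b ∈ nM S u) :
    a + b ∈ nM S (t + u) := by
  induction t generalizing a with
  | zero => simpa using add_mem_nM_of_mem ha hb
  | succ t ih =>
    obtain ⟨g, hg, hg0, y, hy, rfl⟩ := mem_nM_succ.1 ha
    rw [Nat.succ_add]
    exact mem_nM_succ.2 ⟨g, hg, hg0, y + b, ih hy, by ring⟩

lemma le_of_mem_nM {t s : ℕ} (hs : s ∈ nM S t) : t ≤ s := by
  induction t generalizing s with
  | zero => exact Nat.zero_le s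
  | succ t ih =>
    obtain ⟨g, -, hg0, y, hy, rfl⟩ := mem_nM_succ.1 hs
    have := ih hy
    omega

lemma mem_nM_ordS {s : ℕ} (hs : s ∈ S) : s ∈ nM S (ordS S s) :=
  Nat.sSup_mem (s := {t | s ∈ nM S t}) ⟨0, hs⟩ ⟨s, fun _ => le_of_mem_nM⟩

lemma le_ordS_of_mem_nM {s t : ℕ} (h : s ∈ nM S t) : t ≤ ordS S s :=
  le_csSup ⟨s, fun _ => le_of_mem_nM⟩ h

lemma ordS_le_self (s : ℕ) : ordS S s ≤ s :=
  csSup_le' fun _ => le_of_mem_nM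

lemma ordS_zero : ordS S 0 = 0 :=
  Nat.eq_zero_of_le_zero (ordS_le_self 0)

lemma one_le_ordS {s : ℕ} (hs : s ∈ S) (hs0 : s ≠ 0) : 1 ≤ ordS S s :=
  le_ordS_of_mem_nM (mem_nM_succ.2 ⟨s, hs, hs0, 0, S.zero_mem, add_zero s⟩)

lemma ordS_add_ordS_le {a b : ℕ} (ha : a ∈ S) (hb : b ∈ S) :
    ordS S a + ordS S b ≤ ordS S (a + b) :=
  le_ordS_of_mem_nM (add_mem_nM (mem_nM_ordS ha) (mem_nM_ordS hb))

lemma ordS_add_mul_ordS_le {s x : ℕ} (hs : s ∈ S) (hx : x ∈ S) (c : ℕ) :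
    ordS S s + c * ordS S x ≤ ordS S (s + c * x) := by
  induction c with
  | zero => simp
  | succ c ih =>
    have h := ordS_add_ordS_le (add_mem hs (nsmul_mem hx c)) hx
    rw [smul_eq_mul] at h
    rw [show s + (c + 1) * x = s + c * x + x by ring, Nat.add_one_mul]
    omega

lemma mul_mem_nM {c t a : ℕ} (hc : c ≠ 0) (hST : ∀ a ∈ S, c * a ∈ T) (ha : a ∈ nM S t) :
    c * a ∈ nM T t := by
  induction t generalizing a with
  | zero => exact hST a ha
  | succ t ih =>
    obtain ⟨g, hg, hg0, y, hy, rfl⟩ := mem_nM_succ.1 ha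
    exact mem_nM_succ.2 ⟨c * g, hST g hg, mul_ne_zero hc hg0, c * y, ih hy, by ring⟩

end Order

section Reduction

variable {S : AddSubmonoid ℕ}

lemma exists_conductor (hS : IsNumSgp S) : ∃ c, ∀ v, c ≤ v → v ∈ S := by
  obtain ⟨B, hB⟩ := hS.2.2.bddAbove
  refine ⟨B + 1, fun v hv => ?_⟩
  by_contra hvS
  have := hB hvS
  omega

lemma mult_le {s : ℕ} (hs : s ∈ S) (hs0 : s ≠ 0) : mult S ≤ s :=
  Nat.sInf_le ⟨hs, hs0⟩

lemma mult_mem (hS : IsNumSgp S) : mult S ∈ S ∧ mult S ≠ 0 := by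
  obtain ⟨c, hc⟩ := exists_conductor hS
  exact Nat.sInf_mem (s := {x | x ∈ S ∧ x ≠ 0}) ⟨c + 1, hc _ (by omega), by omega⟩

lemma mul_mult_add_mem_nM (hS : IsNumSgp S) {v : ℕ} (hv : v ∈ S) (t : ℕ) :
    t * mult S + v ∈ nM S t := by
  induction t with
  | zero => simpa [nM] using hv
  | succ t ih =>
    exact mem_nM_succ.2 ⟨mult S, (mult_mem hS).1, (mult_mem hS).2, _, ih, by ring⟩

lemma mem_nM_succ_cases {t s : ℕ} (hs : s ∈ nM S (t + 1)) :
    (∃ y ∈ nM S t, s = mult S + y) ∨ (t + 1) * (mult S + 1) ≤ s := by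
  induction t generalizing s with
  | zero =>
    obtain ⟨g, hg, hg0, y, hy, rfl⟩ := mem_nM_succ.1 hs
    obtain rfl | hgm := eq_or_ne g (mult S)
    · exact Or.inl ⟨y, hy, rfl⟩
    · have := mult_le hg hg0
      omega
  | succ t ih =>
    obtain ⟨g, hg, hg0, y, hy, rfl⟩ := mem_nM_succ.1 hs
    obtain rfl | hgm := eq_or_ne g (mult S)
    · exact Or.inl ⟨y, hy, rfl⟩
    have := mult_le hg hg0
    rcases ih hy with ⟨y', hy', rfl⟩ | hy
    · exact Or.inl ⟨g + y', mem_nM_succ.2 ⟨g, hg, hg0, y', hy', rfl⟩, by ring⟩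
    · right
      rw [add_mul]
      omega

lemma exists_nM_succ_eq_image (hS : IsNumSgp S) :
    ∃ r, nM S (r + 1) = (mult S + ·) '' nM S r := by
  obtain ⟨c, hc⟩ := exists_conductor hS
  refine ⟨c, Set.Subset.antisymm (fun s hs => ?_) ?_⟩
  · rcases mem_nM_succ_cases hs with ⟨y, hy, rfl⟩ | hlarge
    · exact ⟨y, hy, rfl⟩
    · -- all summands exceed `mult S`, so `s - mult S` lies beyond `c * mult S + c`
      have hexp : (c + 1) * (mult S + 1) = c * mult S + c + mult S + 1 := by ring
      refine ⟨c * mult S + (s - mult S - c * mult S),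
        mul_mult_add_mem_nM hS (hc _ (by omega)) c, by simp only; omega⟩
  · rintro _ ⟨y, hy, rfl⟩
    exact mem_nM_succ.2 ⟨mult S, (mult_mem hS).1, (mult_mem hS).2, y, hy, rfl⟩

lemma nM_succ_eq_image_of_redNum_le (hS : IsNumSgp S) {t : ℕ} (ht : redNum S ≤ t) :
    nM S (t + 1) = (mult S + ·) '' nM S t := by
  induction t, ht using Nat.le_induction with
  | base => exact Nat.sInf_mem (exists_nM_succ_eq_image hS)
  | succ t _ ih =>
    rw [← Set.singleton_add] at ih ⊢
    change (S \ {0} : Set ℕ) + nM S (t + 1) = _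
    conv_lhs => rw [ih, add_left_comm]
    rfl

lemma exists_eq_mul_mult_add_of_mem_nM (hS : IsNumSgp S) {k s : ℕ}
    (hs : s ∈ nM S (redNum S + k)) : ∃ y ∈ nM S (redNum S), s = k * mult S + y := by
  induction k generalizing s with
  | zero => exact ⟨s, hs, by simp⟩
  | succ k ih =>
    rw [← add_assoc, nM_succ_eq_image_of_redNum_le hS (Nat.le_add_right _ k)] at hs
    obtain ⟨y, hy, rfl⟩ := hs
    obtain ⟨y', hy', rfl⟩ := ih hy
    exact ⟨y', hy', by ring⟩

lemma exists_ordS_eq_redNum (hS : IsNumSgp S) {s k : ℕ} (hs : s ∈ S)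
    (hk : ordS S s = redNum S + k) :
    ∃ y ∈ S, ordS S y = redNum S ∧ s = k * mult S + y := by
  have hs' := mem_nM_ordS hs
  rw [hk] at hs'
  obtain ⟨y, hy, rfl⟩ := exists_eq_mul_mult_add_of_mem_nM hS hs'
  have hle := le_ordS_of_mem_nM
    (add_mem_nM (by simpa using mul_mult_add_mem_nM hS S.zero_mem k) (mem_nM_ordS (nM_subset hy)))
  have hge := le_ordS_of_mem_nM hy
  exact ⟨y, nM_subset hy, by omega, rfl⟩

lemma bddAbove_lS_set (hS : IsNumSgp S) (x : ℕ) :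
    BddAbove {t | ∃ s ∈ (S : Set ℕ), ordS S s ≤ redNum S ∧
      t = ordS S (s + x) - ordS S x - ordS S s} := by
  obtain ⟨c, hc⟩ := exists_conductor hS
  refine ⟨(redNum S + 1) * mult S + c + x, ?_⟩
  rintro t ⟨s, -, hord, rfl⟩
  have hs : s < (redNum S + 1) * mult S + c := by
    by_contra! hs
    have hmem := mul_mult_add_mem_nM hS (hc (s - (redNum S + 1) * mult S) (by omega))
      (redNum S + 1)
    rw [Nat.add_sub_cancel' (by omega)] at hmem
    have := le_ordS_of_mem_nM hmem
    omega
  have := ordS_le_self (S := S) (s + x)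
  omega

lemma ordS_add_le_of_ordS_le_redNum (hS : IsNumSgp S) {s x : ℕ} (hs : s ∈ S)
    (hr : ordS S s ≤ redNum S) : ordS S (s + x) ≤ ordS S s + ordS S x + lS S x := by
  have := le_csSup (bddAbove_lS_set hS x) ⟨s, hs, hr, rfl⟩
  rw [lS]
  omega

lemma ordS_add_le (hS : IsNumSgp S) {s x : ℕ} (hs : s ∈ S) (hx : x ∈ S) :
    ordS S (s + x) ≤ ordS S s + ordS S x + lS S x := by
  rcases le_or_gt (ordS S s) (redNum S) with hr | hr
  · exact ordS_add_le_of_ordS_le_redNum hS hs hr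
  -- Peel off copies of `mult S` from `s` and `s + x` down to order `redNum S`.
  obtain ⟨k, hk⟩ := Nat.exists_eq_add_of_le hr.le
  obtain ⟨y, hy, hyr, rfl⟩ := exists_ordS_eq_redNum hS hs hk
  have hs' : k * mult S + y ∈ S := add_mem (by simpa using nsmul_mem (mult_mem hS).1 k) hy
  have hsx : ordS S (k * mult S + y) ≤ ordS S (k * mult S + y + x) := by
    have := ordS_add_ordS_le hs' hx
    omega
  obtain ⟨j, hj⟩ := Nat.exists_eq_add_of_le (hk ▸ hsx)
  have hmem := mem_nM_ordS (add_mem hs' hx)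
  rw [hj, add_assoc] at hmem
  obtain ⟨z, hz, hzeq⟩ := exists_eq_mul_mult_add_of_mem_nM hS hmem
  have hyx : y + x = j * mult S + z := by rw [add_mul] at hzeq; omega
  have hlow : j + redNum S ≤ ordS S (y + x) :=
    le_ordS_of_mem_nM (hyx ▸ add_mem_nM (by simpa using mul_mult_add_mem_nM hS S.zero_mem j) hz)
  have hup := ordS_add_le_of_ordS_le_redNum hS hy hyr.le (x := x)
  omega

lemma ordS_add_mul_le (hS : IsNumSgp S) {s x : ℕ} (hs : s ∈ S) (hx : x ∈ S) (c : ℕ) :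
    ordS S (s + c * x) ≤ ordS S s + c * (ordS S x + lS S x) := by
  induction c with
  | zero => simp
  | succ c ih =>
    have h := ordS_add_le hS (add_mem hs (nsmul_mem hx c)) hx
    rw [smul_eq_mul] at h
    rw [show s + (c + 1) * x = s + c * x + x by ring, Nat.add_one_mul]
    omega

end Reduction

section Apery

variable {S : AddSubmonoid ℕ} {x : ℕ}

lemma zero_mem_Ap (hx0 : x ≠ 0) : 0 ∈ Ap S x :=
  ⟨S.zero_mem, by rintro ⟨t, -, ht⟩; omega⟩

lemma exists_mem_Ap_add_mul (hx0 : x ≠ 0) {b : ℕ} (hb : b ∈ S) :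
    ∃ w ∈ Ap S x, ∃ k : ℕ, b = w + k * x := by
  induction b using Nat.strong_induction_on with
  | _ b ih =>
    by_cases hAp : ∃ t ∈ (S : Set ℕ), b = t + x
    · obtain ⟨t, ht, rfl⟩ := hAp
      obtain ⟨w, hw, k, rfl⟩ := ih _ (by omega) ht
      exact ⟨w, hw, k + 1, by ring⟩
    · exact ⟨b, ⟨hb, hAp⟩, 0, by simp⟩

lemma nonneg_of_mem_Ap (hx : x ∈ S) {w b : ℕ} (hw : w ∈ Ap S x) (hb : b ∈ S) {c : ℤ}
    (h : (b : ℤ) = w + c * x) : 0 ≤ c := by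
  by_contra! hc
  obtain ⟨n, hn⟩ : ∃ n : ℕ, c = -(n + 1) := ⟨(-c - 1).toNat, by omega⟩
  refine hw.2 ⟨b + n * x, add_mem hb (by simpa using nsmul_mem hx n), ?_⟩
  subst hn
  have : (w : ℤ) = b + n * x + x := by linear_combination -h
  exact_mod_cast this

lemma mem_Ap_of_add_mem_Ap {a b : ℕ} (ha : a ∈ S) (hb : b ∈ S) (hab : a + b ∈ Ap S x) :
    b ∈ Ap S x := by
  refine ⟨hb, ?_⟩
  rintro ⟨t, ht, rfl⟩
  exact hab.2 ⟨a + t, add_mem ha ht, by ring⟩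

lemma bddAbove_Ap (hS : IsNumSgp S) (x : ℕ) : BddAbove (Ap S x) := by
  obtain ⟨c, hc⟩ := exists_conductor hS
  refine ⟨c + x, fun w hw => ?_⟩
  by_contra! hlt
  exact hw.2 ⟨w - x, hc _ (by omega), by omega⟩

lemma nonempty_MaxMAp (hS : IsNumSgp S) (hx0 : x ≠ 0) : (MaxMAp S x).Nonempty := by
  refine ⟨sSup (Ap S x), Nat.sSup_mem ⟨0, zero_mem_Ap hx0⟩ (bddAbove_Ap hS x), ?_⟩
  rintro y hy ⟨z, -, rfl, -⟩
  have := le_csSup (bddAbove_Ap hS x) hy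
  omega

/-- `MLe S u v` is the relation `u ⪯_M v`. -/
def MLe (S : Set ℕ) (u v : ℕ) : Prop := ∃ z ∈ S, v = u + z ∧ ordS S v = ordS S u + ordS S z

end Apery

section Frobenius

variable {S : AddSubmonoid ℕ} {x : ℕ}

lemma zmem_natCast {S : Set ℕ} {n : ℕ} : zmem S n ↔ n ∈ S :=
  ⟨fun ⟨_, ht, hteq⟩ => Nat.cast_injective hteq ▸ ht, fun h => ⟨n, h, rfl⟩⟩

lemma not_zmem_of_neg {S : Set ℕ} {z : ℤ} (hz : z < 0) : ¬ zmem S z := by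
  rintro ⟨t, -, rfl⟩
  omega

lemma not_zmem_sub_of_mem_Ap {S : Set ℕ} {w : ℕ} (hw : w ∈ Ap S x) : ¬ zmem S (w - x) := by
  rintro ⟨t, ht, hteq⟩
  exact hw.2 ⟨t, ht, by omega⟩

lemma isGreatest_Frob (hS : IsNumSgp S) : IsGreatest {z | ¬ zmem S z} (Frob S) := by
  obtain ⟨c, hc⟩ := exists_conductor hS
  have hbdd : BddAbove {z | ¬ zmem S z} := by
    refine ⟨c, fun z hz => ?_⟩
    by_contra! hcz
    exact hz ⟨z.toNat, hc _ (by omega), by omega⟩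
  exact ⟨Int.csSup_mem ⟨-1, not_zmem_of_neg (by norm_num)⟩ hbdd, fun _ hz => le_csSup hbdd hz⟩

lemma zmem_of_Frob_lt (hS : IsNumSgp S) {z : ℤ} (hz : Frob S < z) : zmem S z := by
  by_contra h
  exact (isGreatest_Frob hS).2 h |>.not_gt hz

lemma neg_one_le_Frob (hS : IsNumSgp S) : -1 ≤ Frob S :=
  (isGreatest_Frob hS).2 (not_zmem_of_neg (by norm_num))

lemma coe_le_Frob_add_of_mem_Ap (hS : IsNumSgp S) {w : ℕ} (hw : w ∈ Ap S x) :
    (w : ℤ) ≤ Frob S + x := by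
  have := (isGreatest_Frob hS).2 (not_zmem_sub_of_mem_Ap hw)
  omega

lemma exists_mem_Ap_coe_eq_Frob_add (hS : IsNumSgp S) (hx0 : x ≠ 0) :
    ∃ w ∈ Ap S x, (w : ℤ) = Frob S + x := by
  have := neg_one_le_Frob hS
  obtain ⟨t, ht, hteq⟩ := zmem_of_Frob_lt hS (z := Frob S + x) (by omega)
  refine ⟨t, ⟨ht, ?_⟩, hteq⟩
  rintro ⟨u, hu, rfl⟩
  exact (isGreatest_Frob hS).1 ⟨u, hu, by push_cast at hteq; omega⟩

lemma exists_mem_Ap_coe_eq_Frob_add_sub (hsym : IsSymmetric S) {w : ℕ}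
    (hw : w ∈ Ap S x) : ∃ w' ∈ Ap S x, (w' : ℤ) = Frob S + x - w := by
  obtain ⟨t, ht, hteq⟩ : zmem S (Frob S + x - w) := by
    have := not_not.1 ((hsym (w - x)).not.1 (not_zmem_sub_of_mem_Ap hw))
    rwa [sub_sub_eq_add_sub] at this
  refine ⟨t, ⟨ht, ?_⟩, hteq⟩
  rintro ⟨u, hu, rfl⟩
  exact (hsym w).1 (zmem_natCast.2 hw.1) ⟨u, hu, by push_cast at hteq; omega⟩

end Frobenius

section Glue

variable {S₁ S₂ : AddSubmonoid ℕ} {p q : ℕ}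

def glue (S₁ S₂ : AddSubmonoid ℕ) (p q : ℕ) : AddSubmonoid ℕ := q • S₁ ⊔ p • S₂

lemma mem_glue {s : ℕ} : s ∈ glue S₁ S₂ p q ↔ ∃ a ∈ S₁, ∃ b ∈ S₂, q * a + p * b = s := by
  simp [glue, AddSubmonoid.mem_sup, AddSubmonoid.mem_smul_pointwise_iff_exists]

lemma mul_add_mul_mem_glue {a b : ℕ} (ha : a ∈ S₁) (hb : b ∈ S₂) :
    q * a + p * b ∈ glue S₁ S₂ p q :=
  mem_glue.2 ⟨a, ha, b, hb, rfl⟩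

lemma mul_mem_glue_left {a : ℕ} (ha : a ∈ S₁) : q * a ∈ glue S₁ S₂ p q := by
  simpa using mul_add_mul_mem_glue (p := p) ha S₂.zero_mem

lemma mul_mem_glue_right {b : ℕ} (hb : b ∈ S₂) : p * b ∈ glue S₁ S₂ p q := by
  simpa using mul_add_mul_mem_glue (q := q) S₁.zero_mem hb

lemma glue_comm : glue S₁ S₂ p q = glue S₂ S₁ q p := sup_comm _ _

lemma exists_mem_Ap_of_mem_glue (hp : p ∈ S₁) (hq0 : q ≠ 0) {s : ℕ}
    (hs : s ∈ glue S₁ S₂ p q) : ∃ a ∈ S₁, ∃ b ∈ Ap S₂ q, s = q * a + p * b := by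
  obtain ⟨a, ha, b, hb, rfl⟩ := mem_glue.1 hs
  obtain ⟨w, hw, k, rfl⟩ := exists_mem_Ap_add_mul hq0 hb
  exact ⟨a + k * p, add_mem ha (by simpa using nsmul_mem hp k), w, hw, by ring⟩

lemma exists_eq_add_mul_of_mul_add_mul_eq (hq : q ∈ S₂) (hq0 : q ≠ 0) (hpq : p.Coprime q)
    {b B : ℕ} {a A : ℤ} (hb : b ∈ Ap S₂ q) (hB : B ∈ S₂)
    (h : (q : ℤ) * a + p * b = q * A + p * B) : ∃ c : ℕ, B = b + c * q ∧ a = A + c * p := by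
  obtain ⟨c, hc⟩ : (q : ℤ) ∣ B - b :=
    hpq.symm.isCoprime.dvd_of_dvd_mul_left ⟨a - A, by linear_combination -h⟩
  have hc0 := nonneg_of_mem_Ap hq hb hB (c := c) (by linear_combination hc)
  lift c to ℕ using hc0
  refine ⟨c, by exact_mod_cast (by linear_combination hc : (B : ℤ) = b + c * q), ?_⟩
  have hq0' : (q : ℤ) ≠ 0 := by exact_mod_cast hq0
  exact mul_left_cancel₀ hq0' (by linear_combination h + p * hc)

lemma zmem_glue_iff (hp : p ∈ S₁) (hq : q ∈ S₂) (hq0 : q ≠ 0) (hpq : p.Coprime q) {b : ℕ}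
    (hb : b ∈ Ap S₂ q) (z : ℤ) : zmem (glue S₁ S₂ p q) (q * z + p * b) ↔ zmem S₁ z := by
  constructor
  · rintro ⟨s, hs, hsz⟩
    obtain ⟨a, ha, B, hB, rfl⟩ := mem_glue.1 hs
    obtain ⟨c, -, rfl⟩ := exists_eq_add_mul_of_mul_add_mul_eq hq hq0 hpq hb hB
      (a := z) (A := a) (by push_cast at hsz; linarith)
    exact ⟨a + c * p, add_mem ha (by simpa using nsmul_mem hp c), by push_cast; ring⟩
  · rintro ⟨a, ha, rfl⟩
    exact ⟨q * a + p * b, mul_add_mul_mem_glue ha hb.1, by push_cast; ring⟩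

lemma exists_int_eq_mul_add_mul (hS₂ : IsNumSgp S₂) (hq0 : q ≠ 0) (hpq : p.Coprime q) (z : ℤ) :
    ∃ a : ℤ, ∃ b ∈ Ap S₂ q, z = q * a + p * b := by
  obtain ⟨c, hc⟩ := exists_conductor hS₂
  have hbez : (1 : ℤ) = p * p.gcdA q + q * p.gcdB q := by
    have := Nat.gcd_eq_gcd_ab p q
    rwa [hpq, Nat.cast_one] at this
  -- shift the Bézout coefficient of `p` into `S₂` by a multiple of `q`, then reduce modulo `q`
  set k : ℤ := |p.gcdA q * z| + c
  have hq1 : (1 : ℤ) ≤ q := by exact_mod_cast Nat.one_le_iff_ne_zero.2 hq0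
  have hB : (c : ℤ) ≤ p.gcdA q * z + q * k := by
    have := le_abs_self (-(p.gcdA q * z))
    rw [abs_neg] at this
    nlinarith [abs_nonneg (p.gcdA q * z)]
  obtain ⟨w, hw, j, hj⟩ := exists_mem_Ap_add_mul hq0 (hc (p.gcdA q * z + q * k).toNat (by omega))
  refine ⟨j * p + p.gcdB q * z - p * k, w, hw, ?_⟩
  have hj' : p.gcdA q * z + q * k = w + j * q := by
    rw [← Int.toNat_of_nonneg (by omega : 0 ≤ p.gcdA q * z + q * k), hj]
    push_cast; ring
  linear_combination z * hbez + p * hj'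

lemma isGreatest_glue (hS₁ : IsNumSgp S₁) (hS₂ : IsNumSgp S₂) (hp : p ∈ S₁) (hq : q ∈ S₂)
    (hq0 : q ≠ 0) (hpq : p.Coprime q) :
    IsGreatest {z | ¬ zmem (glue S₁ S₂ p q) z} (q * Frob S₁ + p * (Frob S₂ + q)) := by
  obtain ⟨w, hw, hweq⟩ := exists_mem_Ap_coe_eq_Frob_add hS₂ hq0
  refine ⟨?_, fun z hz => ?_⟩
  · show ¬ _
    rw [← hweq, zmem_glue_iff hp hq hq0 hpq hw]
    exact (isGreatest_Frob hS₁).1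
  obtain ⟨a, b, hb, rfl⟩ := exists_int_eq_mul_add_mul hS₂ hq0 hpq z
  replace hz : ¬ zmem S₁ a := (zmem_glue_iff hp hq hq0 hpq hb a).not.1 hz
  have ha := (isGreatest_Frob hS₁).2 hz
  have hb' := coe_le_Frob_add_of_mem_Ap hS₂ hb
  have hq' : (0 : ℤ) ≤ q := by positivity
  have hp' : (0 : ℤ) ≤ p := by positivity
  nlinarith [mul_le_mul_of_nonneg_left ha hq', mul_le_mul_of_nonneg_left hb' hp']

lemma Frob_glue (hS₁ : IsNumSgp S₁) (hS₂ : IsNumSgp S₂) (hp : p ∈ S₁) (hq : q ∈ S₂)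
    (hq0 : q ≠ 0) (hpq : p.Coprime q) :
    Frob (glue S₁ S₂ p q) = q * Frob S₁ + p * (Frob S₂ + q) :=
  (isGreatest_glue hS₁ hS₂ hp hq hq0 hpq).csSup_eq

lemma isSymmetric_left_of_glue (hS₁ : IsNumSgp S₁) (hS₂ : IsNumSgp S₂) (hp : p ∈ S₁)
    (hq : q ∈ S₂) (hq0 : q ≠ 0) (hpq : p.Coprime q) (h : IsSymmetric (glue S₁ S₂ p q)) :
    IsSymmetric S₁ := by
  obtain ⟨w, hw, hweq⟩ := exists_mem_Ap_coe_eq_Frob_add hS₂ hq0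
  intro z
  have hF : Frob (glue S₁ S₂ p q) - (q * z + p * (0 : ℕ)) = q * (Frob S₁ - z) + p * w := by
    rw [Frob_glue hS₁ hS₂ hp hq hq0 hpq, hweq]
    push_cast; ring
  have := h (q * z + p * (0 : ℕ))
  rwa [hF, zmem_glue_iff hp hq hq0 hpq (zero_mem_Ap hq0),
    zmem_glue_iff hp hq hq0 hpq hw] at this

lemma isSymmetric_glue (hS₁ : IsNumSgp S₁) (hS₂ : IsNumSgp S₂) (hp : p ∈ S₁) (hq : q ∈ S₂)
    (hq0 : q ≠ 0) (hpq : p.Coprime q) (h₁ : IsSymmetric S₁) (h₂ : IsSymmetric S₂) :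
    IsSymmetric (glue S₁ S₂ p q) := by
  intro z
  obtain ⟨a, b, hb, rfl⟩ := exists_int_eq_mul_add_mul hS₂ hq0 hpq z
  obtain ⟨w, hw, hweq⟩ := exists_mem_Ap_coe_eq_Frob_add_sub h₂ hb
  have hF : Frob (glue S₁ S₂ p q) - (q * a + p * b) = q * (Frob S₁ - a) + p * w := by
    rw [Frob_glue hS₁ hS₂ hp hq hq0 hpq, hweq]
    ring
  rw [hF, zmem_glue_iff hp hq hq0 hpq hb, zmem_glue_iff hp hq hq0 hpq hw]
  exact h₁ a

lemma isSymmetric_glue_iff (hS₁ : IsNumSgp S₁) (hS₂ : IsNumSgp S₂) (hp : p ∈ S₁)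
    (hq : q ∈ S₂) (hp0 : p ≠ 0) (hq0 : q ≠ 0) (hpq : p.Coprime q) :
    IsSymmetric (glue S₁ S₂ p q) ↔ IsSymmetric S₁ ∧ IsSymmetric S₂ :=
  ⟨fun h => ⟨isSymmetric_left_of_glue hS₁ hS₂ hp hq hq0 hpq h,
      isSymmetric_left_of_glue hS₂ hS₁ hq hp hp0 hpq.symm (glue_comm ▸ h)⟩,
    fun ⟨h₁, h₂⟩ => isSymmetric_glue hS₁ hS₂ hp hq hq0 hpq h₁ h₂⟩

end Glue

section GlueOrder

variable {S₁ S₂ : AddSubmonoid ℕ} {p q : ℕ}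

lemma exists_mul_add_mul_eq_of_mem_nM_glue {L s : ℕ} (hs : s ∈ nM (glue S₁ S₂ p q) L) :
    ∃ a ∈ S₁, ∃ b ∈ S₂, q * a + p * b = s ∧ L ≤ ordS S₁ a + ordS S₂ b := by
  induction L generalizing s with
  | zero =>
    obtain ⟨a, ha, b, hb, rfl⟩ := mem_glue.1 hs
    exact ⟨a, ha, b, hb, rfl, Nat.zero_le _⟩
  | succ L ih =>
    obtain ⟨g, hg, hg0, y, hy, rfl⟩ := mem_nM_succ.1 hs
    obtain ⟨α, hα, β, hβ, rfl⟩ := mem_glue.1 hg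
    obtain ⟨A, hA, B, hB, rfl, hL⟩ := ih hy
    have hαβ : 1 ≤ ordS S₁ α + ordS S₂ β := by
      rcases eq_or_ne α 0 with rfl | hα0
      · have := one_le_ordS hβ (by rintro rfl; simp at hg0)
        omega
      · have := one_le_ordS hα hα0
        omega
    have := ordS_add_ordS_le hα hA
    have := ordS_add_ordS_le hβ hB
    exact ⟨α + A, add_mem hα hA, β + B, add_mem hβ hB, by ring, by omega⟩

structure IsSpecificGlue (S₁ S₂ : AddSubmonoid ℕ) (p q : ℕ) : Prop where
  numSgp₂ : IsNumSgp S₂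
  mem₁ : p ∈ S₁
  mem₂ : q ∈ S₂
  ne_zero₁ : p ≠ 0
  ne_zero₂ : q ≠ 0
  coprime : p.Coprime q
  specific : ordS S₂ q + lS S₂ q ≤ ordS S₁ p

lemma ordS_glue (h : IsSpecificGlue S₁ S₂ p q) {a b : ℕ} (ha : a ∈ S₁) (hb : b ∈ Ap S₂ q) :
    ordS (glue S₁ S₂ p q) (q * a + p * b) = ordS S₁ a + ordS S₂ b := by
  refine le_antisymm ?_ (le_ordS_of_mem_nM (add_mem_nM
    (mul_mem_nM h.ne_zero₂ (fun _ => mul_mem_glue_left) (mem_nM_ordS ha))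
    (mul_mem_nM h.ne_zero₁ (fun _ => mul_mem_glue_right) (mem_nM_ordS hb.1))))
  obtain ⟨A, hA, B, hB, heq, hL⟩ := exists_mul_add_mul_eq_of_mem_nM_glue
    (mem_nM_ordS (mul_add_mul_mem_glue ha hb.1))
  obtain ⟨c, rfl, hc⟩ := exists_eq_add_mul_of_mul_add_mul_eq h.mem₂ h.ne_zero₂ h.coprime hb hB
    (a := a) (A := A) (by exact_mod_cast heq.symm)
  obtain rfl : a = A + c * p := by exact_mod_cast hc
  -- Trading `c q` in the `S₂`-part for `c p` in the `S₁`-part costs at most `c (ord q + l_q)`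
  -- and gains at least `c ord p`: this is where specificity enters.
  have h₁ := ordS_add_mul_le h.numSgp₂ hb.1 h.mem₂ c
  have h₂ := ordS_add_mul_ordS_le hA h.mem₁ c
  have h₃ := Nat.mul_le_mul_left c h.specific
  omega

end GlueOrder

section GlueApery

variable {S₁ S₂ : AddSubmonoid ℕ} {p q x : ℕ}

lemma mem_Ap_glue_iff (hp : p ∈ S₁) (hq : q ∈ S₂) (hq0 : q ≠ 0) (hpq : p.Coprime q) {s : ℕ} :
    s ∈ Ap (glue S₁ S₂ p q) (q * x) ↔ ∃ a ∈ Ap S₁ x, ∃ b ∈ Ap S₂ q, s = q * a + p * b := by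
  constructor
  · rintro ⟨hs, hsx⟩
    obtain ⟨a, ha, b, hb, rfl⟩ := exists_mem_Ap_of_mem_glue hp hq0 hs
    refine ⟨a, ⟨ha, ?_⟩, b, hb, rfl⟩
    rintro ⟨t, ht, rfl⟩
    exact hsx ⟨q * t + p * b, mul_add_mul_mem_glue ht hb.1, by ring⟩
  · rintro ⟨a, ha, b, hb, rfl⟩
    refine ⟨mul_add_mul_mem_glue ha.1 hb.1, ?_⟩
    rintro ⟨T, hT, hTeq⟩
    obtain ⟨A, hA, B, hB, rfl⟩ := mem_glue.1 hT
    have hTeq' : (q : ℤ) * a + p * b = q * (A + x : ℕ) + p * B := by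
      exact_mod_cast hTeq.trans (by ring)
    obtain ⟨c, -, hc⟩ := exists_eq_add_mul_of_mul_add_mul_eq hq hq0 hpq hb hB hTeq'
    exact ha.2 ⟨A + c * p, add_mem hA (by simpa using nsmul_mem hp c), by omega⟩

lemma ordS_glue_mul_left (h : IsSpecificGlue S₁ S₂ p q) {a : ℕ} (ha : a ∈ S₁) :
    ordS (glue S₁ S₂ p q) (q * a) = ordS S₁ a := by
  simpa [ordS_zero] using ordS_glue h ha (zero_mem_Ap h.ne_zero₂)

lemma ordS_glue_mul_right (h : IsSpecificGlue S₁ S₂ p q) {b : ℕ} (hb : b ∈ Ap S₂ q) :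
    ordS (glue S₁ S₂ p q) (p * b) = ordS S₂ b := by
  simpa [ordS_zero] using ordS_glue h S₁.zero_mem hb

lemma mLe_glue_of_mLe_left (h : IsSpecificGlue S₁ S₂ p q) {a a' b : ℕ} (ha : a ∈ S₁)
    (hb : b ∈ Ap S₂ q) (hle : MLe S₁ a a') :
    MLe (glue S₁ S₂ p q) (q * a + p * b) (q * a' + p * b) := by
  obtain ⟨z, hz, rfl, hord⟩ := hle
  refine ⟨q * z, mul_mem_glue_left hz, by ring, ?_⟩
  rw [ordS_glue h (add_mem ha hz) hb, ordS_glue h ha hb, ordS_glue_mul_left h hz, hord]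
  ring

lemma mLe_glue_of_mLe_right (h : IsSpecificGlue S₁ S₂ p q) {a b b' : ℕ} (ha : a ∈ S₁)
    (hb : b ∈ Ap S₂ q) (hb' : b' ∈ Ap S₂ q) (hle : MLe S₂ b b') :
    MLe (glue S₁ S₂ p q) (q * a + p * b) (q * a + p * b') := by
  obtain ⟨z, hz, rfl, hord⟩ := hle
  refine ⟨p * z, mul_mem_glue_right hz, by ring, ?_⟩
  rw [ordS_glue h ha hb', ordS_glue h ha hb,
    ordS_glue_mul_right h (mem_Ap_of_add_mem_Ap hb.1 hz hb'), hord]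
  ring

lemma mLe_of_mLe_glue (h : IsSpecificGlue S₁ S₂ p q) {a a' b b' : ℕ} (ha : a ∈ S₁)
    (hb : b ∈ Ap S₂ q) (ha' : a' ∈ S₁) (hb' : b' ∈ Ap S₂ q)
    (hle : MLe (glue S₁ S₂ p q) (q * a + p * b) (q * a' + p * b')) :
    MLe S₁ a a' ∧ (a' = a → MLe S₂ b b') := by
  obtain ⟨z, hz, hzeq, hord⟩ := hle
  obtain ⟨α, hα, β, hβ, rfl⟩ := exists_mem_Ap_of_mem_glue h.mem₁ h.ne_zero₂ hz
  rw [ordS_glue h ha' hb', ordS_glue h ha hb, ordS_glue h hα hβ] at hord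
  obtain ⟨c, hB, hc⟩ := exists_eq_add_mul_of_mul_add_mul_eq h.mem₂ h.ne_zero₂ h.coprime hb'
    (add_mem hb.1 hβ.1) (a := a') (A := a + α) (by exact_mod_cast hzeq.trans (by ring))
  have hαc : α + c * p ∈ S₁ := add_mem hα (by simpa using nsmul_mem h.mem₁ c)
  have ha'eq : a' = a + (α + c * p) := by omega
  -- The same trade-off as in `ordS_glue`, now forced to be an equality.
  have h₁ := ordS_add_ordS_le hb.1 hβ.1
  have h₂ := ordS_add_mul_le h.numSgp₂ hb'.1 h.mem₂ c
  have h₃ := Nat.mul_le_mul_left c h.specific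
  have h₄ := ordS_add_ordS_le ha hαc
  have h₅ := ordS_add_mul_ordS_le hα h.mem₁ c
  rw [← hB] at h₂
  rw [← ha'eq] at h₄
  refine ⟨⟨α + c * p, hαc, ha'eq, by omega⟩, fun haa => ?_⟩
  obtain ⟨rfl, rfl⟩ : α = 0 ∧ c = 0 := by
    have := Nat.pos_of_ne_zero h.ne_zero₁
    constructor <;> nlinarith
  subst haa
  rw [ordS_zero] at hord
  exact ⟨β, hβ.1, by omega, by omega⟩

lemma mem_MaxMAp_glue_iff (h : IsSpecificGlue S₁ S₂ p q) {w : ℕ} :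
    w ∈ MaxMAp (glue S₁ S₂ p q) (q * x) ↔
      ∃ a ∈ MaxMAp S₁ x, ∃ b ∈ MaxMAp S₂ q, w = q * a + p * b := by
  have hAp := fun s => mem_Ap_glue_iff (x := x) (s := s) h.mem₁ h.mem₂ h.ne_zero₂ h.coprime
  constructor
  · rintro ⟨hw, hmax⟩
    obtain ⟨a, ha, b, hb, rfl⟩ := (hAp _).1 hw
    refine ⟨a, ⟨ha, fun a' ha' hle => ?_⟩, b, ⟨hb, fun b' hb' hle => ?_⟩, rfl⟩
    · have := hmax _ ((hAp _).2 ⟨a', ha', b, hb, rfl⟩) (mLe_glue_of_mLe_left h ha.1 hb hle)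
      exact Nat.eq_of_mul_eq_mul_left (Nat.pos_of_ne_zero h.ne_zero₂) (by omega)
    · have := hmax _ ((hAp _).2 ⟨a, ha, b', hb', rfl⟩) (mLe_glue_of_mLe_right h ha.1 hb hb' hle)
      exact Nat.eq_of_mul_eq_mul_left (Nat.pos_of_ne_zero h.ne_zero₁) (by omega)
  · rintro ⟨a, ha, b, hb, rfl⟩
    refine ⟨(hAp _).2 ⟨a, ha.1, b, hb.1, rfl⟩, fun y hy hle => ?_⟩
    obtain ⟨a', ha', b', hb', rfl⟩ := (hAp _).1 hy
    obtain ⟨h₁, h₂⟩ := mLe_of_mLe_glue h ha.1.1 hb.1 ha'.1 hb' hle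
    obtain rfl := ha.2 a' ha' h₁
    rw [hb.2 b' hb' (h₂ rfl)]

lemma mPureWrt_glue_iff (hS₁ : IsNumSgp S₁) (h : IsSpecificGlue S₁ S₂ p q) (hx0 : x ≠ 0) :
    MPureWrt (glue S₁ S₂ p q) (q * x) ↔ MPureWrt S₁ x ∧ MPureWrt S₂ q := by
  have hord : ∀ a ∈ MaxMAp S₁ x, ∀ b ∈ MaxMAp S₂ q,
      ordS (glue S₁ S₂ p q) (q * a + p * b) = ordS S₁ a + ordS S₂ b :=
    fun a ha b hb => ordS_glue h ha.1.1 hb.1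
  have hmax := fun a ha b hb => (mem_MaxMAp_glue_iff h (x := x)).2 ⟨a, ha, b, hb, rfl⟩
  obtain ⟨a₀, ha₀⟩ := nonempty_MaxMAp hS₁ hx0
  obtain ⟨b₀, hb₀⟩ := nonempty_MaxMAp h.numSgp₂ h.ne_zero₂
  constructor
  · intro hpure
    refine ⟨fun a ha a' ha' => ?_, fun b hb b' hb' => ?_⟩
    · have := hpure _ (hmax a ha b₀ hb₀) _ (hmax a' ha' b₀ hb₀)
      rw [hord a ha b₀ hb₀, hord a' ha' b₀ hb₀] at this
      omega
    · have := hpure _ (hmax a₀ ha₀ b hb) _ (hmax a₀ ha₀ b' hb')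
      rw [hord a₀ ha₀ b hb, hord a₀ ha₀ b' hb'] at this
      omega
  · rintro ⟨h₁, h₂⟩ w hw w' hw'
    obtain ⟨a, ha, b, hb, rfl⟩ := (mem_MaxMAp_glue_iff h).1 hw
    obtain ⟨a', ha', b', hb', rfl⟩ := (mem_MaxMAp_glue_iff h).1 hw'
    rw [hord a ha b hb, hord a' ha' b' hb', h₁ a ha a' ha', h₂ b hb b' hb']

end GlueApery

lemma one_mem_of_one_mem_closure {X : Set ℕ} (h : 1 ∈ AddSubmonoid.closure X) : 1 ∈ X := by
  suffices ∀ n ∈ AddSubmonoid.closure X, n = 1 → 1 ∈ X from this 1 h rfl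
  intro n hn
  induction hn using AddSubmonoid.closure_induction with
  | mem n hn => exact fun h1 => h1 ▸ hn
  | zero => exact fun h01 => absurd h01 zero_ne_one
  | add a b _ _ iha ihb =>
    intro hab
    rcases Nat.add_eq_one_iff.1 hab with ⟨-, hb⟩ | ⟨ha, -⟩
    exacts [ihb hb, iha ha]

namespace Gluing

variable (G : Gluing)

lemma S_eq_glue : G.S =
    glue (AddSubmonoid.closure (Set.range G.m)) (AddSubmonoid.closure (Set.range G.n)) G.p G.q := by
  rw [glue, AddSubmonoid.smul_closure, AddSubmonoid.smul_closure, ← AddSubmonoid.closure_union]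
  rfl

lemma p_ne_zero : G.p ≠ 0 := by
  intro hp
  have hq : G.q = 1 := by simpa [hp] using G.hpq
  exact G.hqn (hq ▸ one_mem_of_one_mem_closure (hq ▸ G.hq))

lemma q_ne_zero : G.q ≠ 0 := by
  intro hq
  have hp : G.p = 1 := by simpa [hq] using G.hpq
  exact G.hpm (hp ▸ one_mem_of_one_mem_closure (hp ▸ G.hp))

lemma isSpecificGlue (hG : G.Specific) :
    IsSpecificGlue (AddSubmonoid.closure (Set.range G.m)) (AddSubmonoid.closure (Set.range G.n))
      G.p G.q :=
  ⟨G.hnum₂, G.hp, G.hq, G.p_ne_zero, G.q_ne_zero, G.hpq, hG⟩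

lemma isSymmetric_S_iff : IsSymmetric G.S ↔ IsSymmetric G.S₁ ∧ IsSymmetric G.S₂ := by
  rw [G.S_eq_glue]
  exact isSymmetric_glue_iff G.hnum₁ G.hnum₂ G.hp G.hq G.p_ne_zero G.q_ne_zero G.hpq

lemma mPureWrt_S_iff (hG : G.Specific) {x : ℕ} (hx0 : x ≠ 0) :
    MPureWrt G.S (G.q * x) ↔ MPureWrt G.S₁ x ∧ MPureWrt G.S₂ G.q := by
  rw [G.S_eq_glue]
  exact mPureWrt_glue_iff G.hnum₁ (G.isSpecificGlue hG) hx0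

end Gluing

theorem stmt16_general (G : Gluing) (hG : G.Specific) (x : ℕ) (hx0 : x ≠ 0) :
    (IsSymmetric G.S ∧ MPureWrt G.S (G.q * x) ∧
        (IsSymmetric G.S₁ ∨ IsSymmetric G.S₂)) ↔
      (IsSymmetric G.S₁ ∧ MPureWrt G.S₁ x ∧
        IsSymmetric G.S₂ ∧ MPureWrt G.S₂ G.q) := by
  rw [G.isSymmetric_S_iff, G.mPureWrt_S_iff hG hx0]
  tauto

/-- for a specific gluing `S` of `S₁` and `S₂` and nonzero `x ∈ S₁`,
the following are equivalent:
(1) `S` is symmetric and M-pure with respect to `qx`, and `S₁` (or `S₂`) is symmetric;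
(2) `S₁` is symmetric and M-pure with respect to `x`, and `S₂` is symmetric and
M-pure with respect to `q`. -/
theorem stmt16 (G : Gluing) (hG : G.Specific) (x : ℕ) (hx : x ∈ G.S₁) (hx0 : x ≠ 0) :
    (IsSymmetric G.S ∧ MPureWrt G.S (G.q * x) ∧
        (IsSymmetric G.S₁ ∨ IsSymmetric G.S₂)) ↔
      (IsSymmetric G.S₁ ∧ MPureWrt G.S₁ x ∧
        IsSymmetric G.S₂ ∧ MPureWrt G.S₂ G.q) :=
  stmt16_general G hG x hx0
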